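/- For every integer m ≥ 0, π/6 = ∑_{n=0}^∞ ((−1)^n/(2n+1)) · L_{2m(2n+1)} · (2 / (√3·L_{2m} + √(3·L_{2m}² + 4)))^{2n+1}, where the series on the right converges. -/

import Mathlib

/-- Lucas numbers: `L 0 = 2`, `L 1 = 1`, `L (n+2) = L (n+1) + L n`. -/
def lucasNum : ℕ → ℕ
  | 0 => 2
  | 1 => 1
  | n + 2 => lucasNum (n + 1) + lucasNum n

set_option maxHeartbeats 1000000 in
open Real goldenRatio in
lemma lucasNum_binet (n : ℕ) : (lucasNum n : ℝ) = φ ^ n + ψ ^ n := by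
  induction n using Nat.twoStepInduction with
  | zero => norm_num [lucasNum]
  | one => simp [lucasNum, goldenRatio_add_goldenConj]
  | more n ih1 ih2 =>
    have h1 : φ ^ (n + 2) = φ ^ (n + 1) + φ ^ n := by
      have : φ ^ (n + 2) = φ ^ n * φ ^ 2 := by ring
      rw [this, goldenRatio_sq]; ring
    have h2 : ψ ^ (n + 2) = ψ ^ (n + 1) + ψ ^ n := by
      have : ψ ^ (n + 2) = ψ ^ n * ψ ^ 2 := by ring
      rw [this, goldenConj_sq]; ring
    show ((lucasNum (n + 1) + lucasNum n : ℕ) : ℝ) = _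
    push_cast [ih1, ih2, h1, h2]; ring

set_option maxHeartbeats 1000000 in
open Real goldenRatio in
theorem pi_div_six_lucas_series (m : ℕ) :
    HasSum
      (fun n : ℕ => (-1 : ℝ) ^ n / (2 * (n : ℝ) + 1) *
        (lucasNum (2 * m * (2 * n + 1)) : ℝ) *
        (2 / (Real.sqrt 3 * (lucasNum (2 * m) : ℝ) +
          Real.sqrt (3 * (lucasNum (2 * m) : ℝ) ^ 2 + 4))) ^ (2 * n + 1))
      (Real.pi / 6) := by
  set L : ℝ := (lucasNum (2 * m) : ℝ) with hLdef
  set α : ℝ := φ ^ (2 * m) with hαdef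
  have hα0 : 0 < α := pow_pos (by positivity) _
  have hα1 : 1 ≤ α := one_le_pow₀ one_lt_goldenRatio.le
  have hψ : ψ ^ (2 * m) = α⁻¹ := by
    rw [hαdef, ← inv_pow, inv_goldenRatio, (even_two_mul m).neg_pow]
  have hBinet : L = α + α⁻¹ := by rw [hLdef, lucasNum_binet, hψ]
  have hαL : α < L := by
    have : 0 < α⁻¹ := by positivity
    linarith [hBinet]
  set s : ℝ := Real.sqrt (3 * L ^ 2 + 4) with hsdef
  have hL0 : 0 < L := by
    rw [hBinet]; positivity
  have hs2 : s ^ 2 = 3 * L ^ 2 + 4 := Real.sq_sqrt (by positivity)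
  have hs0 : 0 < s := Real.sqrt_pos.mpr (by positivity)
  have h32 : Real.sqrt 3 ^ 2 = 3 := Real.sq_sqrt (by norm_num)
  have h31 : 1 ≤ Real.sqrt 3 := by nlinarith [Real.sqrt_nonneg 3]
  have hden : 0 < Real.sqrt 3 * L + s := by positivity
  set x : ℝ := 2 / (Real.sqrt 3 * L + s) with hxdef
  have hx0 : 0 < x := by positivity
  have hx2 : x = (s - Real.sqrt 3 * L) / 2 := by
    rw [hxdef, div_eq_div_iff hden.ne' (by norm_num : (2:ℝ) ≠ 0)]
    nlinarith [hs2, h32]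
  have key : x ^ 2 + Real.sqrt 3 * L * x = 1 := by
    rw [hx2]; nlinarith [hs2, h32]
  have h3pos : (0:ℝ) < Real.sqrt 3 := by linarith
  have hx1 : x < 1 := by nlinarith [key, hx0, mul_pos (mul_pos h3pos hL0) hx0]
  have hLx : Real.sqrt 3 * (L * x) = 1 - x ^ 2 := by linarith [key]
  have hLx0 : 0 < L * x := by positivity
  have hαx : α * x < 1 := by
    nlinarith [mul_pos (sub_pos.mpr hαL) hx0, hLx, hLx0, sq_nonneg x,
      mul_nonneg (sub_nonneg.mpr h31) hLx0.le]
  have hβx : α⁻¹ * x < 1 := by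
    have h1 : α⁻¹ ≤ 1 := inv_le_one_of_one_le₀ hα1
    nlinarith [hx0, hx1]
  have hαx0 : 0 < α * x := by positivity
  have hβx0 : 0 < α⁻¹ * x := by positivity
  have S1 := Real.hasSum_arctan (x := α * x) (by rw [Real.norm_eq_abs, abs_of_pos hαx0]; exact hαx)
  have S2 := Real.hasSum_arctan (x := α⁻¹ * x) (by rw [Real.norm_eq_abs, abs_of_pos hβx0]; exact hβx)
  have hsum := S1.add S2
  have harc : Real.arctan (α * x) + Real.arctan (α⁻¹ * x) = Real.pi / 6 := by
    have hprod : (α * x) * (α⁻¹ * x) = x ^ 2 := by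
      field_simp
    rw [Real.arctan_add (by rw [hprod]; nlinarith [hx0, hx1])]
    have hratio : (α * x + α⁻¹ * x) / (1 - (α * x) * (α⁻¹ * x)) = 1 / Real.sqrt 3 := by
      rw [hprod, ← hLx]
      rw [show α * x + α⁻¹ * x = L * x by rw [hBinet]; ring]
      rw [div_mul_eq_div_div_swap, div_self hLx0.ne']
    rw [hratio, ← Real.tan_pi_div_six,
      Real.arctan_tan (by linarith [Real.pi_pos]) (by linarith [Real.pi_pos])]
  rw [show Real.pi / 6 = Real.arctan (α * x) + Real.arctan (α⁻¹ * x) from harc.symm]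
  convert hsum using 2 with n
  have hL1 : (lucasNum (2 * m * (2 * n + 1)) : ℝ) = α ^ (2 * n + 1) + (α⁻¹) ^ (2 * n + 1) := by
    rw [lucasNum_binet, pow_mul φ (2*m), pow_mul ψ (2*m), hψ, ← hαdef]
  rw [hL1]
  push_cast
  rw [mul_pow, mul_pow]
  ring
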